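/- (Krall–Frink) Let a ∈ ℂ with a − 1 ∉ {0, −1, −2, …}. For each non-negative integer m, let y_m(x;a) be the unique polynomial of degree m with constant term 1 that is an eigenfunction of the operator d^B = x² d²/dx² + (ax + 2) d/dx, and let ρ(x;a) = (1/(2πi)) Σ_{k=0}^∞ (Γ(a)/Γ(a+k−1)) (−2/x)^k (a function defined for x ≠ 0 by this everywhere-convergent series). Then for all non-negative integers n ≠ m, the contour integral around the unit circle satisfies ∫_{|x|=1} y_n(x;a) y_m(x;a) ρ(x;a) dx = 0. -/

import Mathlib

open Polynomial Real

noncomputable section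

/-- The weight function `ρ(x;a)` of Krall and Frink. -/
def besselRho (a : ℂ) (x : ℂ) : ℂ :=
  (1 / (2 * (π : ℂ) * Complex.I)) *
    ∑' k : ℕ, Complex.Gamma a / Complex.Gamma (a + (k : ℂ) - 1) * (-2 / x) ^ k

/-- `y` is the Bessel polynomial `y_m(·;a)`: the polynomial of degree `m` with constant
term `1` satisfying `x²y'' + (ax+2)y' = m(m+a-1)y`. -/
def IsBesselPoly1 (a : ℂ) (m : ℕ) (y : Polynomial ℂ) : Prop :=
  y.natDegree = m ∧ y.coeff 0 = 1 ∧
    X ^ 2 * derivative (derivative y) + (Polynomial.C a * X + 2) * derivative y =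
      Polynomial.C ((m : ℂ) * ((m : ℂ) + a - 1)) * y

end

/-!
The weight is the Laurent series `ρ(x) = (2πi)⁻¹ ∑ tₖ x⁻ᵏ` with `tₖ = Γ(a)/Γ(a+k-1) (-2)ᵏ`, which
converges absolutely on the unit circle, so integrating term by term gives `∮ xʲ ρ(x) dx = tⱼ₊₁`:
integration against `ρ` is the moment functional `L` with moments `tⱼ₊₁`. The recurrence
`(a+k-1) tₖ₊₁ = -2 tₖ` is exactly the Pearson equation `L(x²W' + (ax+2)W) = 0`, which makes the
Bessel operator `x²y'' + (ax+2)y'` symmetric for `L`. Eigenpolynomials for distinct eigenvalues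
are therefore `L`-orthogonal, and `n(n+a-1) = m(m+a-1)` with `n ≠ m` would force
`a - 1 = -(n+m)`.
-/

open Complex Metric

section Pearson

variable {R : Type*} [CommRing R] (L : R[X] →ₗ[R] R) {A B : R[X]}

theorem LinearMap.map_operator_mul_eq_map_mul_operator_of_pearson
    (hL : ∀ W, L (A * derivative W + B * W) = 0) (p q : R[X]) :
    L ((A * derivative (derivative p) + B * derivative p) * q) =
      L (p * (A * derivative (derivative q) + B * derivative q)) := by
  have h := hL (derivative p * q - p * derivative q)
  rw [← sub_eq_zero, ← map_sub, ← h]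
  congr 1
  simp only [derivative_sub, derivative_mul]
  ring

theorem LinearMap.map_mul_eq_zero_of_pearson [IsDomain R]
    (hL : ∀ W, L (A * derivative W + B * W) = 0) {p q : R[X]} {r s : R}
    (hp : A * derivative (derivative p) + B * derivative p = C r * p)
    (hq : A * derivative (derivative q) + B * derivative q = C s * q) (hne : r ≠ s) :
    L (p * q) = 0 := by
  have h := L.map_operator_mul_eq_map_mul_operator_of_pearson hL p q
  rw [hp, hq, mul_assoc, mul_left_comm p, ← smul_eq_C_mul, ← smul_eq_C_mul, map_smul, map_smul,
    smul_eq_mul, smul_eq_mul] at h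
  have h' : (r - s) * L (p * q) = 0 := by rw [sub_mul, h, sub_self]
  exact (mul_eq_zero.mp h').resolve_left (sub_ne_zero.mpr hne)

end Pearson

section LaurentSeries

variable {c : ℕ → ℂ} {R : ℝ}

theorem circleIntegral_pow_mul_inv_pow (hR : 0 < R) (j k : ℕ) :
    (∮ z in C(0, R), z ^ j * z⁻¹ ^ k) = if k = j + 1 then 2 * π * I else 0 := by
  have hzpow : Set.EqOn (fun z : ℂ => z ^ j * z⁻¹ ^ k) (fun z => (z - 0) ^ ((j : ℤ) - k))
      (sphere 0 R) := by
    intro z hz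
    simp [zpow_sub₀ (ne_zero_of_mem_sphere hR.ne' ⟨_, hz⟩), div_eq_mul_inv]
  rw [circleIntegral.integral_congr hR.le hzpow]
  split_ifs with hk
  · have : ((j : ℤ) - k) = -1 := by omega
    simp only [this, zpow_neg_one]
    exact circleIntegral.integral_sub_inv_of_mem_ball (mem_ball_self hR)
  · exact circleIntegral.integral_sub_zpow_of_ne (by omega) _ _ _

theorem norm_mul_inv_pow_of_mem_sphere {z : ℂ} (hz : z ∈ sphere 0 R) (k : ℕ) :
    ‖c k * z⁻¹ ^ k‖ = ‖c k‖ / R ^ k := by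
  rw [mem_sphere_zero_iff_norm] at hz
  simp [hz, div_eq_mul_inv]

theorem continuousOn_pow_mul_inv_pow (hR : 0 < R) (j k : ℕ) (b : ℂ) :
    ContinuousOn (fun z : ℂ => z ^ j * (b * z⁻¹ ^ k)) (sphere 0 R) :=
  (continuousOn_pow j).mul (continuousOn_const.mul
    ((continuousOn_inv₀.mono fun _ hz => ne_zero_of_mem_sphere hR.ne' ⟨_, hz⟩).pow k))

theorem continuousOn_tsum_mul_inv_pow (hR : 0 < R) (hc : Summable fun k => ‖c k‖ / R ^ k) :
    ContinuousOn (fun z => ∑' k, c k * z⁻¹ ^ k) (sphere 0 R) := by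
  refine continuousOn_tsum (fun k => ?_) hc
    (fun k z hz => (norm_mul_inv_pow_of_mem_sphere hz k).le)
  simpa using continuousOn_pow_mul_inv_pow hR 0 k (c k)

theorem circleIntegral_pow_mul_tsum_inv_pow (hR : 0 < R) (hc : Summable fun k => ‖c k‖ / R ^ k)
    (j : ℕ) : (∮ z in C(0, R), z ^ j * ∑' k, c k * z⁻¹ ^ k) = 2 * π * I * c (j + 1) := by
  have hsum : HasSum (fun k => ∮ z in C(0, R), z ^ j * (c k * z⁻¹ ^ k))
      (∮ z in C(0, R), z ^ j * ∑' k, c k * z⁻¹ ^ k) := by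
    refine intervalIntegral.hasSum_integral_of_dominated_convergence
      (fun k _ => R ^ (j + 1) * (‖c k‖ / R ^ k)) (fun k => ?_) (fun k => ?_)
      (.of_forall fun _ _ => hc.mul_left _) intervalIntegrable_const (.of_forall fun θ _ => ?_)
    · exact (intervalIntegrable_iff.mp
        ((continuousOn_pow_mul_inv_pow hR j k (c k)).circleIntegrable hR.le).out).1
    · refine .of_forall fun θ _ => le_of_eq ?_
      rw [norm_smul, norm_mul, norm_mul_inv_pow_of_mem_sphere (circleMap_mem_sphere 0 hR.le θ)]
      simp [abs_of_pos hR, pow_succ]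
      ring
    · have hz := circleMap_mem_sphere 0 hR.le θ
      exact ((hc.of_norm_bounded fun k =>
        (norm_mul_inv_pow_of_mem_sphere hz k).le).hasSum.mul_left _).const_smul _
  have hterm (k : ℕ) : (∮ z in C(0, R), z ^ j * (c k * z⁻¹ ^ k))
      = if k = j + 1 then 2 * π * I * c (j + 1) else 0 := by
    simp_rw [mul_left_comm _ (c k), circleIntegral.integral_const_mul,
      circleIntegral_pow_mul_inv_pow hR]
    split_ifs with hk
    · rw [hk, mul_comm]
    · rw [mul_zero]
  simp only [hterm] at hsum
  exact hsum.unique (hasSum_ite_eq (j + 1) _)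

theorem circleIntegral_eval_mul_tsum_inv_pow (hR : 0 < R) (hc : Summable fun k => ‖c k‖ / R ^ k)
    (p : ℂ[X]) : (∮ z in C(0, R), p.eval z * ∑' k, c k * z⁻¹ ^ k)
      = 2 * π * I * p.sum fun j b => b * c (j + 1) := by
  have hint (q : ℂ[X]) : CircleIntegrable (fun z => q.eval z * ∑' k, c k * z⁻¹ ^ k) 0 R :=
    (q.continuous.continuousOn.mul (continuousOn_tsum_mul_inv_pow hR hc)).circleIntegrable hR.le
  induction p using Polynomial.induction_on' with
  | add p q hp hq =>
    rw [Polynomial.sum_add_index _ _ _ (fun _ => zero_mul _) (fun _ _ _ => add_mul ..)]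
    simp only [eval_add, add_mul, circleIntegral.integral_add (hint p) (hint q), hp, hq, mul_add]
  | monomial j b =>
    simp only [eval_monomial, mul_assoc, circleIntegral.integral_const_mul,
      circleIntegral_pow_mul_tsum_inv_pow hR hc, Polynomial.sum_monomial_index, zero_mul]
    ring

end LaurentSeries

noncomputable def besselRhoCoeff (a : ℂ) (k : ℕ) : ℂ := Gamma a / Gamma (a + k - 1) * (-2) ^ k

theorem besselRho_eq_tsum (a x : ℂ) :
    besselRho a x = (2 * π * I)⁻¹ * ∑' k, besselRhoCoeff a k * x⁻¹ ^ k := by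
  rw [besselRho, one_div]
  congr 1
  refine tsum_congr fun k => ?_
  rw [besselRhoCoeff, div_eq_mul_inv (-2), mul_pow, mul_assoc]

-- At `a + k - 1 = 0` both sides vanish, since Mathlib sets `Γ 0 = 0`.
theorem besselRhoCoeff_succ (a : ℂ) (k : ℕ) :
    (a + k - 1) * besselRhoCoeff a (k + 1) = -2 * besselRhoCoeff a k := by
  rcases eq_or_ne (a + k - 1) 0 with h | h
  · simp [besselRhoCoeff, h]
  · have hGamma : Gamma (a + (k + 1 : ℕ) - 1) = (a + k - 1) * Gamma (a + k - 1) := by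
      rw [← Gamma_add_one _ h]
      push_cast
      ring_nf
    rw [besselRhoCoeff, besselRhoCoeff, hGamma, ← mul_assoc, mul_div_assoc', mul_div_mul_left _ _ h]
    ring

theorem summable_norm_besselRhoCoeff (a : ℂ) : Summable fun k => ‖besselRhoCoeff a k‖ := by
  refine summable_of_ratio_norm_eventually_le (r := 1 / 2) (by norm_num) ?_
  filter_upwards [tendsto_natCast_atTop_atTop.eventually_ge_atTop (‖a - 1‖ + 4)] with k hk
  have hlarge : 4 ≤ ‖a + k - 1‖ := by
    have := norm_sub_norm_le (k : ℂ) (1 - a)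
    rw [show (k : ℂ) - (1 - a) = a + k - 1 by ring, norm_sub_rev, Complex.norm_natCast] at this
    linarith
  have hrec := congrArg norm (besselRhoCoeff_succ a k)
  rw [norm_mul, norm_mul, norm_neg, Complex.norm_ofNat] at hrec
  simp only [norm_norm]
  nlinarith [norm_nonneg (besselRhoCoeff a (k + 1))]

noncomputable def besselMomentFunctional (a : ℂ) : ℂ[X] →ₗ[ℂ] ℂ :=
  Polynomial.lsum fun j => LinearMap.toSpanSingleton ℂ ℂ (besselRhoCoeff a (j + 1))

theorem besselMomentFunctional_apply (a : ℂ) (p : ℂ[X]) :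
    besselMomentFunctional a p = p.sum fun j b => b * besselRhoCoeff a (j + 1) := by
  simp [besselMomentFunctional, Polynomial.lsum_apply]

theorem circleIntegral_eval_mul_besselRho (a : ℂ) (p : ℂ[X]) :
    (∮ x in C(0, 1), p.eval x * besselRho a x) = besselMomentFunctional a p := by
  have h2piI : (2 * π * I : ℂ) ≠ 0 := by simp [pi_ne_zero]
  simp_rw [besselRho_eq_tsum, mul_left_comm _ (2 * π * I : ℂ)⁻¹,
    circleIntegral.integral_const_mul]
  rw [circleIntegral_eval_mul_tsum_inv_pow one_pos (by simpa using summable_norm_besselRhoCoeff a),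
    inv_mul_cancel_left₀ h2piI, besselMomentFunctional_apply]

theorem besselOperator_monomial (a : ℂ) (n : ℕ) (b : ℂ) :
    X ^ 2 * derivative (monomial n b) + (C a * X + 2) * monomial n b =
      monomial (n + 1) ((n + a) * b) + monomial n (2 * b) := by
  rw [derivative_monomial]
  rcases n with _ | n
  · simp [← C_mul_X_pow_eq_monomial, map_ofNat C 2]
    ring
  · simp only [← C_mul_X_pow_eq_monomial, map_mul, map_add, map_natCast, map_ofNat C 2,
      add_tsub_cancel_right]
    push_cast
    ring

theorem besselMomentFunctional_pearson (a : ℂ) (W : ℂ[X]) :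
    besselMomentFunctional a (X ^ 2 * derivative W + (C a * X + 2) * W) = 0 := by
  induction W using Polynomial.induction_on' with
  | add p q hp hq =>
    rw [derivative_add, mul_add, mul_add, add_add_add_comm, map_add, hp, hq, add_zero]
  | monomial n b =>
    have hrec := besselRhoCoeff_succ a (n + 1)
    push_cast at hrec
    simp only [besselOperator_monomial, map_add, besselMomentFunctional_apply,
      Polynomial.sum_monomial_index, zero_mul]
    linear_combination b * hrec

/-- Krall and Frink's orthogonality relation for the Bessel polynomials on the unit circle. -/
theorem krall_frink_orthogonality (a : ℂ) (ha : ∀ k : ℕ, a - 1 ≠ -(k : ℂ))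
    (m n : ℕ) (hnm : n ≠ m) (yn ym : Polynomial ℂ)
    (hyn : IsBesselPoly1 a n yn) (hym : IsBesselPoly1 a m ym) :
    (∮ x in C(0, 1), Polynomial.eval x yn * Polynomial.eval x ym * besselRho a x) = 0 := by
  have heigen : (n : ℂ) * (n + a - 1) ≠ m * (m + a - 1) := by
    intro h
    have hfactor : ((n : ℂ) - m) * (n + m + a - 1) = 0 := by linear_combination h
    rcases mul_eq_zero.mp hfactor with h | h
    · exact hnm (by exact_mod_cast sub_eq_zero.mp h)
    · exact ha (n + m) (by push_cast; linear_combination h)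
  simp_rw [← eval_mul, circleIntegral_eval_mul_besselRho]
  exact (besselMomentFunctional a).map_mul_eq_zero_of_pearson
    (besselMomentFunctional_pearson a) hyn.2.2 hym.2.2 heigen
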